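/- (Lemma 5 core) Let q be prime, k ≥ 1, g : Fin k → ZMod q, and suppose there exists a nonzero i : Fin k → ℕ with i_j ≤ L for all j such that ∑_j i_j • g_j = 0 in ZMod q. Then for every natural number M, the number of x ∈ ZMod q expressible as x = ∑_j m_j • g_j with m : Fin k → ℕ and m_j ≤ M for all j is at most k·(L+1)·(M+1)^(k−1). In particular, if k·(L+1)·(M+1)^(k−1) < q then some x ∈ ZMod q has no such representation and Diam(q,k,g) > M. -/

import Mathlib

/-!
A relation `∑ j, i j • g j = 0` with `i ≠ 0` lets one subtract `i` from any coefficient vector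
`m ≥ i` without changing the sum, so every sum with coefficients in `[0, M]` is also a sum whose
coefficient vector `m` satisfies `m j < i j` for some `j`. For fixed `j` there are at most
`i j * (M + 1) ^ (k - 1)` such vectors, hence at most `(∑ j, i j) * (M + 1) ^ (k - 1)` reachable
elements. When this is smaller than `q`, some element of `ZMod q` is not reachable with
coefficients `≤ M`, and in particular not with total weight `≤ M`.
-/

/-- `Diam q k g` is the least `N : ℕ` such that every `x : ZMod q` can be written as
`x = ∑ j, i j • g j` with `∑ j, i j ≤ N`, and `⊤` if no such `N` exists. -/
noncomputable def Diam (q k : ℕ) (g : Fin k → ZMod q) : ℕ∞ :=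
  sInf ((↑) '' {N : ℕ | ∀ x : ZMod q, ∃ i : Fin k → ℕ,
    (∑ j, i j) ≤ N ∧ x = ∑ j, (i j) • g j})

open Finset Function

section BoxSums

variable {ι G : Type*} [Fintype ι] [AddCommMonoid G]

def boxSums (g : ι → G) (M : ℕ) : Set G :=
  {x | ∃ m : ι → ℕ, (∀ j, m j ≤ M) ∧ x = ∑ j, m j • g j}

theorem exists_le_not_le_sum_smul_eq {g : ι → G} {i : ι → ℕ} (hi : i ≠ 0)
    (hrel : ∑ j, i j • g j = 0) (m : ι → ℕ) :
    ∃ m' ≤ m, ¬ i ≤ m' ∧ ∑ j, m' j • g j = ∑ j, m j • g j := by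
  induction m using WellFoundedLT.induction with
  | ind m ih =>
    by_cases him : i ≤ m
    · obtain ⟨j, hj⟩ : ∃ j, i j ≠ 0 := by simpa [funext_iff] using hi
      have hlt : m - i < m :=
        Pi.lt_def.2 ⟨tsub_le_self, j, Nat.sub_lt (hj.bot_lt.trans_le (him j)) hj.bot_lt⟩
      obtain ⟨m', hm'le, hm'i, hm'sum⟩ := ih _ hlt
      refine ⟨m', hm'le.trans tsub_le_self, hm'i, hm'sum.trans ?_⟩
      calc ∑ j, (m - i) j • g j
          = ∑ j, (m - i) j • g j + ∑ j, i j • g j := by rw [hrel, add_zero]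
        _ = ∑ j, m j • g j := by
          simp only [← sum_add_distrib, ← add_smul, Pi.sub_apply, Nat.sub_add_cancel (him _)]
    · exact ⟨m, le_rfl, him, rfl⟩

theorem card_piFinset_update_const [DecidableEq ι] {α : Type*} (s t : Finset α) (j : ι) :
    #(Fintype.piFinset (update (fun _ => t) j s)) = #s * #t ^ (Fintype.card ι - 1) := by
  simp_rw [Fintype.card_piFinset, apply_update (fun _ => card)]
  rw [prod_update_of_mem (mem_univ j), prod_const, ← compl_eq_univ_sdiff, card_compl,
    card_singleton]

theorem ncard_boxSums_le {g : ι → G} {i : ι → ℕ} (hi : i ≠ 0) (hrel : ∑ j, i j • g j = 0)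
    (M : ℕ) : (boxSums g M).ncard ≤ (∑ j, i j) * (M + 1) ^ (Fintype.card ι - 1) := by
  classical
  set T := univ.biUnion fun j => Fintype.piFinset (update (fun _ => range (M + 1)) j (range (i j)))
  have hsub : boxSums g M ⊆ T.image fun m => ∑ j, m j • g j := by
    rintro _ ⟨m, hmM, rfl⟩
    obtain ⟨m', hm'm, hm'i, hm'sum⟩ := exists_le_not_le_sum_smul_eq hi hrel m
    obtain ⟨j, hj⟩ : ∃ j, m' j < i j := by simpa [Pi.le_def] using hm'i
    refine mem_image.2 ⟨m', mem_biUnion.2 ⟨j, mem_univ j, Fintype.mem_piFinset.2 fun t => ?_⟩,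
      hm'sum⟩
    rcases eq_or_ne t j with rfl | htj
    · simpa using hj
    · simpa [htj] using Nat.lt_succ_of_le ((hm'm t).trans (hmM t))
  calc (boxSums g M).ncard ≤ #(T.image fun m => ∑ j, m j • g j) :=
        (Set.ncard_le_ncard hsub (finite_toSet _)).trans_eq (Set.ncard_coe_finset _)
    _ ≤ #T := card_image_le
    _ ≤ ∑ j, i j * (M + 1) ^ (Fintype.card ι - 1) := by
        refine card_biUnion_le.trans_eq (sum_congr rfl fun j _ => ?_)
        rw [card_piFinset_update_const, card_range, card_range]
    _ = (∑ j, i j) * (M + 1) ^ (Fintype.card ι - 1) := (sum_mul ..).symm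

end BoxSums

theorem lt_Diam_of_notMem_boxSums {q k : ℕ} {g : Fin k → ZMod q} {M : ℕ} {x : ZMod q}
    (hx : x ∉ boxSums g M) : (M : ℕ∞) < Diam q k g := by
  rw [← ENat.add_one_le_iff (ENat.natCast_ne_top M)]
  refine le_sInf ?_
  rintro _ ⟨N, hN, rfl⟩
  rw [ENat.add_one_le_iff (ENat.natCast_ne_top M), Nat.cast_lt]
  by_contra! hNM
  obtain ⟨m, hmN, rfl⟩ := hN x
  exact hx ⟨m, fun j => (single_le_sum (by simp) (mem_univ j)).trans (hmN.trans hNM), rfl⟩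

theorem relation_bounds_reachable_general (q k : ℕ)
    (g : Fin k → ZMod q) (L : ℕ)
    (hrel : ∃ i : Fin k → ℕ, i ≠ 0 ∧ (∀ j, i j ≤ L) ∧ ∑ j, (i j) • g j = 0)
    (M : ℕ) :
    Nat.card {x : ZMod q | ∃ m : Fin k → ℕ, (∀ j, m j ≤ M) ∧ x = ∑ j, (m j) • g j}
        ≤ k * (L + 1) * (M + 1) ^ (k - 1) ∧
      (k * (L + 1) * (M + 1) ^ (k - 1) < q →
        (∃ x : ZMod q, ¬ ∃ m : Fin k → ℕ, (∀ j, m j ≤ M) ∧ x = ∑ j, (m j) • g j) ∧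
          (M : ℕ∞) < Diam q k g) := by
  obtain ⟨i, hi, hiL, hrel⟩ := hrel
  have hcard : (boxSums g M).ncard ≤ k * (L + 1) * (M + 1) ^ (k - 1) := by
    refine (ncard_boxSums_le hi hrel M).trans ?_
    rw [Fintype.card_fin]
    gcongr
    simpa using sum_le_card_nsmul univ i (L + 1) fun j _ => (hiL j).trans L.le_succ
  refine ⟨hcard, fun hlt => ?_⟩
  have : NeZero q := ⟨by omega⟩
  obtain ⟨x, hx⟩ : ∃ x, x ∉ boxSums g M := by
    by_contra! h
    rw [Set.eq_univ_of_forall h, Set.ncard_univ, Nat.card_zmod] at hcard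
    omega
  exact ⟨⟨x, hx⟩, lt_Diam_of_notMem_boxSums hx⟩

/-- (Lemma 5 core) For `q` prime, `k ≥ 1` and `g : Fin k → ZMod q`, if some nonzero
`i : Fin k → ℕ` with all entries `≤ L` satisfies `∑ j, i j • g j = 0`, then for every `M`
the number of `x : ZMod q` expressible as `∑ j, m j • g j` with all `m j ≤ M` is at most
`k(L+1)(M+1)^(k-1)`; in particular, if `k(L+1)(M+1)^(k-1) < q` then some `x` has no such
representation and `Diam(q,k,g) > M`. -/
theorem relation_bounds_reachable (q k : ℕ) (hq : Nat.Prime q) (hk : 1 ≤ k)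
    (g : Fin k → ZMod q) (L : ℕ)
    (hrel : ∃ i : Fin k → ℕ, i ≠ 0 ∧ (∀ j, i j ≤ L) ∧ ∑ j, (i j) • g j = 0)
    (M : ℕ) :
    Nat.card {x : ZMod q | ∃ m : Fin k → ℕ, (∀ j, m j ≤ M) ∧ x = ∑ j, (m j) • g j}
        ≤ k * (L + 1) * (M + 1) ^ (k - 1) ∧
      (k * (L + 1) * (M + 1) ^ (k - 1) < q →
        (∃ x : ZMod q, ¬ ∃ m : Fin k → ℕ, (∀ j, m j ≤ M) ∧ x = ∑ j, (m j) • g j) ∧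
          (M : ℕ∞) < Diam q k g) :=
  relation_bounds_reachable_general q k g L hrel M
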